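/- Let G and G' be term graphs over Σλ^{1,2} such that G is a λ-term-graph over Σλ^{1,2} and there is a homomorphism h from G to G'. If G is fully back-linked, then G' is also a λ-term-graph over Σλ^{1,2} (i.e. admits a correct abstraction-prefix function), and G' is fully back-linked. If moreover G is an eager-scope λ-term-graph, then so is G'. Consequently, the class of eager-scope λ-term-graphs over Σλ^{1,2} is closed under functional bisimulation: if G is an eager-scope λ-term-graph over Σλ^{1,2} and G ⥲ G' for a Σλ^{1,2}-term-graph G', then G' is an eager-scope λ-term-graph over Σλ^{1,2}. -/

import Mathlib

/-! Common framework: term graphs over a signature, homomorphisms, bisimulations,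
    access paths, λ-ho-term-graphs, λ-ap-ho-term-graphs, λ-term-graphs with
    scope delimiters, and the translation constructions. -/

inductive Lab3 : Type
  | app | lam | var
  deriving DecidableEq

/-- Arity function of the signature Σλ^i = {@, λ, 0} with ar(@)=2, ar(λ)=1, ar(0)=i. -/
def ar3 (i : ℕ) : Lab3 → ℕ
  | .app => 2
  | .lam => 1
  | .var => i

inductive Lab4 : Type
  | app | lam | var | del
  deriving DecidableEq

/-- Arity function of Σλ^{i,j} = {@, λ, 0, S} with ar(@)=2, ar(λ)=1, ar(0)=i, ar(S)=j. -/
def ar4 (i j : ℕ) : Lab4 → ℕ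
  | .app => 2
  | .lam => 1
  | .var => i
  | .del => j

def lab3to4 : Lab3 → Lab4
  | .app => .app
  | .lam => .lam
  | .var => .var

def lab4to3 : Lab4 → Lab3
  | .app => .app
  | .lam => .lam
  | .var => .var
  | .del => .var

/-- A term graph over a signature: vertex labelling, argument (successor) lists of
    length matching the arity of the label, a root, and every vertex reachable
    from the root. -/
structure TermGraph (L : Type) (ar : L → ℕ) (V : Type) where
  lab : V → L
  args : V → List V
  root : V
  args_len : ∀ v, (args v).length = ar (lab v)
  reach : ∀ v, Relation.ReflTransGen (fun a b => b ∈ args a) root v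

namespace TermGraph

variable {L V : Type} {ar : L → ℕ}

/-- `G.Succ k w w'` : `w'` is the `k`-th successor of `w` (the edge w ↣_k w'). -/
def Succ (G : TermGraph L ar V) (k : ℕ) (w w' : V) : Prop :=
  (G.args w)[k]? = some w'

/-- `G.Edge w w'` : `w'` is some successor of `w` (the relation ↣). -/
def Edge (G : TermGraph L ar V) (w w' : V) : Prop :=
  w' ∈ G.args w

/-- Reachability ↠ along edges. -/
def Reaches (G : TermGraph L ar V) (w w' : V) : Prop :=
  Relation.ReflTransGen G.Edge w w'

end TermGraph

/-- Homomorphism (functional bisimulation) of term graphs. -/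
def IsHom {L V₁ V₂ : Type} {ar : L → ℕ} (h : V₁ → V₂)
    (G₁ : TermGraph L ar V₁) (G₂ : TermGraph L ar V₂) : Prop :=
  (∀ v, G₂.lab (h v) = G₁.lab v) ∧
  (∀ v, G₂.args (h v) = (G₁.args v).map h) ∧
  h G₁.root = G₂.root

/-- Bisimulation between term graphs: a term graph on a set of pairs, rooted at the
    pair of roots, whose two projections are homomorphisms. -/
def Bisim {L V₁ V₂ : Type} {ar : L → ℕ}
    (G₁ : TermGraph L ar V₁) (G₂ : TermGraph L ar V₂) : Prop :=
  ∃ (S : Set (V₁ × V₂)) (R : TermGraph L ar S),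
    (R.root : V₁ × V₂) = (G₁.root, G₂.root) ∧
    IsHom (fun x : S => x.val.1) R G₁ ∧
    IsHom (fun x : S => x.val.2) R G₂

/-- An access path of a vertex `w`: a path from the root to `w` (with edge indices)
    that visits no vertex twice. -/
structure AccessPath {L V : Type} {ar : L → ℕ} (G : TermGraph L ar V) (w : V) where
  n : ℕ
  vs : Fin (n + 1) → V
  ks : Fin n → ℕ
  start : vs 0 = G.root
  finish : vs (Fin.last n) = w
  step : ∀ m : Fin n, G.Succ (ks m) (vs m.castSucc) (vs m.succ)
  inj : Function.Injective vs

/-- The conditions (root), (self), (nest), (closed), (scope)₀ and (for i = 1) (scope)₁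
    on a scope function. -/
def ScopeConds (i : ℕ) {V : Type} (G : TermGraph Lab3 (ar3 i) V)
    (Sc : V → Set V) : Prop :=
  (∀ v, G.lab v = .lam → G.root ∉ Sc v \ {v}) ∧
  (∀ v, G.lab v = .lam → v ∈ Sc v) ∧
  (∀ v₀ v₁, G.lab v₀ = .lam → G.lab v₁ = .lam → v₁ ∈ Sc v₀ \ {v₀} →
      Sc v₁ ⊆ Sc v₀ \ {v₀}) ∧
  (∀ v w wk k, G.lab v = .lam → G.Succ k w wk → wk ∈ Sc v \ {v} → w ∈ Sc v) ∧
  (∀ w, G.lab w = .var → ∃ v, G.lab v = .lam ∧ w ∈ Sc v \ {v}) ∧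
  (i = 1 → ∀ w w₀, G.lab w = .var → G.Succ 0 w w₀ →
      G.lab w₀ = .lam ∧ ∀ v, G.lab v = .lam → (w ∈ Sc v ↔ w₀ ∈ Sc v))

/-- λ-ho-term-graph over Σλ^i: a Σλ^i-term-graph endowed with a scope function. -/
structure LamHoTG (i : ℕ) (V : Type) extends TermGraph Lab3 (ar3 i) V where
  Sc : V → Set V
  conds : ScopeConds i toTermGraph Sc

/-- Correctness of an abstraction-prefix function for a Σλ^i-term-graph:
    (root), (λ), (@), (0)₀, and (for i = 1) (0)₁. -/
def CorrectAP (i : ℕ) {V : Type} (G : TermGraph Lab3 (ar3 i) V)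
    (P : V → List V) : Prop :=
  (P G.root = []) ∧
  (∀ w w₀, G.lab w = .lam → G.Succ 0 w w₀ → P w₀ <+: P w ++ [w]) ∧
  (∀ w wk k, G.lab w = .app → G.Succ k w wk → P wk <+: P w) ∧
  (∀ w, G.lab w = .var → P w ≠ []) ∧
  (i = 1 → ∀ w w₀, G.lab w = .var → G.Succ 0 w w₀ →
      G.lab w₀ = .lam ∧ P w₀ ++ [w₀] = P w)

/-- λ-ap-ho-term-graph over Σλ^i: a Σλ^i-term-graph endowed with a correct
    abstraction-prefix function. -/
structure LamApHoTG (i : ℕ) (V : Type) extends TermGraph Lab3 (ar3 i) V where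
  P : V → List V
  correct : CorrectAP i toTermGraph P

/-- `ScToP G Sc P` : the abstraction-prefix function `P` is the one obtained from the
    scope function `Sc` by the mapping A_i: for each vertex `w`, `P w` lists exactly
    the binders of `w` other than `w` itself, in order of strictly decreasing scopes. -/
def ScToP {i : ℕ} {V : Type} (G : TermGraph Lab3 (ar3 i) V)
    (Sc : V → Set V) (P : V → List V) : Prop :=
  ∀ w, (∀ v, v ∈ P w ↔ (G.lab v = .lam ∧ w ∈ Sc v ∧ v ≠ w)) ∧
    (P w).Chain' (fun a b => Sc b ⊂ Sc a)

/-- The scope function obtained from an abstraction-prefix function by the mapping B_i: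
    Sc(v) = { w | v occurs in P(w) } ∪ {v}. -/
def ScOfP {V : Type} (P : V → List V) : V → Set V :=
  fun v => {w | v ∈ P w} ∪ {v}

/-- Homomorphism of λ-ho-term-graphs (given by their underlying term graphs and
    scope functions). -/
def IsHoHom {i : ℕ} {V₁ V₂ : Type} (h : V₁ → V₂)
    (G₁ : TermGraph Lab3 (ar3 i) V₁) (Sc₁ : V₁ → Set V₁)
    (G₂ : TermGraph Lab3 (ar3 i) V₂) (Sc₂ : V₂ → Set V₂) : Prop :=
  IsHom h G₁ G₂ ∧ ∀ v, G₁.lab v = .lam → h '' Sc₁ v = Sc₂ (h v)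

/-- Homomorphism of λ-ap-ho-term-graphs (given by their underlying term graphs and
    abstraction-prefix functions). -/
def IsApHom {i : ℕ} {V₁ V₂ : Type} (h : V₁ → V₂)
    (G₁ : TermGraph Lab3 (ar3 i) V₁) (P₁ : V₁ → List V₁)
    (G₂ : TermGraph Lab3 (ar3 i) V₂) (P₂ : V₂ → List V₂) : Prop :=
  IsHom h G₁ G₂ ∧ ∀ v, (P₁ v).map h = P₂ (h v)

/-- Correctness of an abstraction-prefix function for a Σλ^{i,j}-term-graph:
    (root), (λ), (@), (0)₀, (0)₁ (for i = 1), (S)₁, and (S)₂ (for j = 2). -/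
def CorrectAP4 (i j : ℕ) {V : Type} (G : TermGraph Lab4 (ar4 i j) V)
    (P : V → List V) : Prop :=
  (P G.root = []) ∧
  (∀ w w₀, G.lab w = .lam → G.Succ 0 w w₀ → P w₀ = P w ++ [w]) ∧
  (∀ w wk k, G.lab w = .app → G.Succ k w wk → P wk = P w) ∧
  (∀ w, G.lab w = .var → P w ≠ []) ∧
  (i = 1 → ∀ w w₀, G.lab w = .var → G.Succ 0 w w₀ →
      G.lab w₀ = .lam ∧ P w₀ ++ [w₀] = P w) ∧
  (∀ w w₀, G.lab w = .del → G.Succ 0 w w₀ → ∃ v, P w₀ ++ [v] = P w) ∧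
  (j = 2 → ∀ w w₁, G.lab w = .del → G.Succ 1 w w₁ →
      G.lab w₁ = .lam ∧ P w₁ ++ [w₁] = P w)

/-- Vertex-set predicate of the construction G_i^j: original vertices (inl) together
    with scope-delimiter vertices (w, k, w', p) inserted along an edge w ↣_k w',
    one for each prefix p with P(w') < p ≤ P(w)·w (for λ-vertices w),
    resp. P(w') < p ≤ P(w) (for @-vertices w). -/
def GVP {i : ℕ} {V : Type} (G : TermGraph Lab3 (ar3 i) V) (P : V → List V) :
    V ⊕ (V × ℕ × V × List V) → Prop
  | .inl _ => True
  | .inr (w, k, w', p) =>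
      G.Succ k w w' ∧ P w' <+: p ∧ P w' ≠ p ∧
      ((G.lab w = .lam ∧ p <+: P w ++ [w]) ∨ (G.lab w = .app ∧ p <+: P w))

/-- Vertex set of the image of G_i^j. -/
def GVert {i : ℕ} {V : Type} (G : TermGraph Lab3 (ar3 i) V) (P : V → List V) : Type :=
  { x : V ⊕ (V × ℕ × V × List V) // GVP G P x }

/-- Labelling of the image of G_i^j: original labels on original vertices,
    `S` on the inserted delimiter vertices. -/
def GLab {i : ℕ} {V : Type} (G : TermGraph Lab3 (ar3 i) V) (P : V → List V)
    (x : GVert G P) : Lab4 :=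
  match x.val with
  | .inl w => lab3to4 (G.lab w)
  | .inr _ => .del

/-- The successor relation of the image of G_i^j (clauses as in the definition of
    the mapping G_i^j; for j = 2 the inserted S-vertices carry a 1-indexed back-link
    to the abstraction vertex whose extended scope they close). -/
def CSucc {i : ℕ} {V : Type} (j : ℕ) (G : TermGraph Lab3 (ar3 i) V) (P : V → List V)
    (k : ℕ) (x y : GVert G P) : Prop :=
  (∃ w wk, x.val = .inl w ∧ y.val = .inl wk ∧ G.Succ k w wk ∧
     (G.lab w = .var ∨ (G.lab w = .lam ∧ P wk = P w ++ [w]) ∨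
      (G.lab w = .app ∧ P wk = P w))) ∨
  (∃ w w₀, x.val = .inl w ∧ G.lab w = .lam ∧ G.Succ 0 w w₀ ∧ P w₀ ≠ P w ++ [w] ∧
     k = 0 ∧ y.val = .inr (w, 0, w₀, P w ++ [w])) ∨
  (∃ w wk, x.val = .inl w ∧ G.lab w = .app ∧ G.Succ k w wk ∧ P wk ≠ P w ∧
     y.val = .inr (w, k, wk, P w)) ∨
  (∃ w k' w' p v, x.val = .inr (w, k', w', p ++ [v]) ∧ k = 0 ∧ P w' ≠ p ∧
     y.val = .inr (w, k', w', p)) ∨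
  (∃ w k' w' v, x.val = .inr (w, k', w', P w' ++ [v]) ∧ k = 0 ∧ y.val = .inl w') ∨
  (j = 2 ∧ ∃ w k' w' p v, x.val = .inr (w, k', w', p ++ [v]) ∧ k = 1 ∧ y.val = .inl v)

/-- `IsGImage i j G P G'` : the Σλ^{i,j}-term-graph `G'` is the image of the
    λ-ap-ho-term-graph given by `G` and `P` under the mapping G_i^j. -/
def IsGImage (i j : ℕ) {V : Type} (G : TermGraph Lab3 (ar3 i) V) (P : V → List V)
    (G' : TermGraph Lab4 (ar4 i j) (GVert G P)) : Prop :=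
  (G'.root).val = .inl G.root ∧
  (∀ x, G'.lab x = GLab G P x) ∧
  (∀ k x y, G'.Succ k x y ↔ CSucc j G P k x y)

/-- One step along the 0-indexed edge of a scope-delimiter vertex. -/
def DelStep {i j : ℕ} {V : Type} (G : TermGraph Lab4 (ar4 i j) V) (a b : V) : Prop :=
  G.lab a = .del ∧ G.Succ 0 a b

/-- The non-delimiter vertices of a Σλ^{i,j}-term-graph. -/
def NVert {i j : ℕ} {V : Type} (G : TermGraph Lab4 (ar4 i j) V) : Type :=
  { v : V // G.lab v ≠ .del }

/-- `IsNImage i j G P G' P'` : the Σλ^i-term-graph `G'` with abstraction-prefix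
    function `P'` is the image of the λ-term-graph `G` (with correct prefix
    function `P`) under the mapping N_i^j: S-vertices are deleted, labels and the
    prefix function are restricted, the root is kept, and w₀ ↣'_k w₁ holds iff
    w₁ is reached from the k-th successor of w₀ by passing through finitely many
    S-vertices along their 0-indexed edges. -/
def IsNImage (i j : ℕ) {V : Type} (G : TermGraph Lab4 (ar4 i j) V) (P : V → List V)
    (G' : TermGraph Lab3 (ar3 i) (NVert G)) (P' : NVert G → List (NVert G)) : Prop :=
  (G'.root).val = G.root ∧
  (∀ x : NVert G, G'.lab x = lab4to3 (G.lab x.val)) ∧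
  (∀ k (a b : NVert G), G'.Succ k a b ↔
      ∃ u, G.Succ k a.val u ∧ Relation.ReflTransGen (DelStep G) u b.val) ∧
  (∀ v : NVert G, (P' v).map Subtype.val = P v.val)

/-- A λ-term-graph over Σλ^{1,2} (given by `G` with correct prefix function `P`) is
    fully back-linked if the last vertex of the abstraction prefix of any vertex `w`
    is reachable from `w`. -/
def FullyBackLinked {V : Type} (G : TermGraph Lab4 (ar4 1 2) V)
    (P : V → List V) : Prop :=
  ∀ w v p, P w = p ++ [v] → G.Reaches w v

/-- Eager-scope: whenever P(w) = p·v there is a path from `w` to `v` which ends with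
    a 0-indexed edge from a variable vertex to `v`, and all of whose intermediate
    vertices have abstraction prefixes extending P(w). -/
def EagerScope {V : Type} (G : TermGraph Lab4 (ar4 1 2) V)
    (P : V → List V) : Prop :=
  ∀ w v p, P w = p ++ [v] →
    ∃ (n : ℕ) (u : Fin (n + 1) → V),
      u 0 = w ∧
      (∀ m : Fin n, G.Edge (u m.castSucc) (u m.succ)) ∧
      G.Succ 0 (u (Fin.last n)) v ∧
      G.lab (u (Fin.last n)) = .var ∧
      ∀ m : Fin (n + 1), m ≠ 0 → P w <+: P (u m)

/-! The prefix function of `G` is pushed forward along `h`, which requires that vertices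
identified by `h` have prefixes identified by `h`. Given `h w₁ = h w₂` with `P w₂ = p ++ [v]`,
walk from `w₂` to `v` (full back-linkedness) and shadow the walk from `w₁`; corresponding
vertices have the same label, so their prefixes grow and shrink in lockstep. Since `P v = p`,
the walk must at some point pop the last entry of `P w₂`, at a variable or delimiter vertex whose
shadow pops `P w₁`. These two vertices close the scopes of binders that are again identified by
`h` and have shorter prefixes, so induction on the prefix lengths applies. -/

open Relation

theorem Relation.ReflTransGen.of_fin_path {α : Type*} {r : α → α → Prop} {n : ℕ}
    (u : Fin (n + 1) → α) (hu : ∀ m : Fin n, r (u m.castSucc) (u m.succ)) :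
    ReflTransGen r (u 0) (u (Fin.last n)) := by
  suffices ∀ m, ReflTransGen r (u 0) (u m) from this _
  intro m
  induction m using Fin.induction with
  | zero => rfl
  | succ m ih => exact ih.tail (hu m)

namespace TermGraph

variable {L V : Type} {ar : L → ℕ} {G : TermGraph L ar V} {k : ℕ} {a b : V}

theorem Succ.edge (hs : G.Succ k a b) : G.Edge a b :=
  List.mem_of_getElem? hs

theorem Edge.exists_succ (he : G.Edge a b) : ∃ k, G.Succ k a b :=
  List.mem_iff_getElem?.mp he

theorem Succ.lt_ar (hs : G.Succ k a b) : k < ar (G.lab a) :=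
  G.args_len a ▸ (List.getElem?_eq_some_iff.mp hs).1

theorem exists_succ_of_lt_ar (hk : k < ar (G.lab a)) : ∃ b, G.Succ k a b :=
  ⟨(G.args a)[k]'(G.args_len a ▸ hk), List.getElem?_eq_getElem _⟩

end TermGraph

namespace IsHom

variable {L V V' : Type} {ar : L → ℕ} {G : TermGraph L ar V} {G' : TermGraph L ar V'}
  {h : V → V'} {k : ℕ} {a b : V}

theorem lab_eq_of_eq (hh : IsHom h G G') (e : h a = h b) : G.lab a = G.lab b := by
  rw [← hh.1 a, ← hh.1 b, e]

theorem succ (hh : IsHom h G G') (hs : G.Succ k a b) : G'.Succ k (h a) (h b) := by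
  unfold TermGraph.Succ at hs ⊢
  rw [hh.2.1 a, List.getElem?_map, hs, Option.map_some]

theorem edge (hh : IsHom h G G') (he : G.Edge a b) : G'.Edge (h a) (h b) := by
  simpa only [TermGraph.Edge, hh.2.1 a] using List.mem_map_of_mem he

theorem reaches (hh : IsHom h G G') (hr : G.Reaches a b) : G'.Reaches (h a) (h b) := by
  induction hr with
  | refl => exact .refl
  | tail _ he ih => exact ih.tail (hh.edge he)

theorem exists_succ_of_succ (hh : IsHom h G G') {b' : V'} (hs : G'.Succ k (h a) b') :
    ∃ b, G.Succ k a b ∧ h b = b' := by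
  simpa [TermGraph.Succ, hh.2.1 a, List.getElem?_map] using hs

theorem exists_succ_of_eq (hh : IsHom h G G') {u : V} (e : h u = h a) (hs : G.Succ k a b) :
    ∃ b₁, G.Succ k u b₁ ∧ h b₁ = h b :=
  hh.exists_succ_of_succ (e ▸ hh.succ hs)

theorem surjective (hh : IsHom h G G') : Function.Surjective h := by
  intro v'
  induction G'.reach v' with
  | refl => exact ⟨G.root, hh.2.2⟩
  | tail _ he ih =>
    obtain ⟨a, rfl⟩ := ih
    rw [hh.2.1 a] at he
    obtain ⟨b, -, rfl⟩ := List.mem_map.mp he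
    exact ⟨b, rfl⟩

end IsHom

namespace CorrectAP4

variable {i j : ℕ} {V V' : Type} {G : TermGraph Lab4 (ar4 i j) V} {P : V → List V}
  {G' : TermGraph Lab4 (ar4 i j) V'} {h : V → V'} {P' : V' → List V'}

theorem of_hom (hC : CorrectAP4 i j G P) (hh : IsHom h G G')
    (hP' : ∀ v, P' (h v) = (P v).map h) : CorrectAP4 i j G' P' := by
  obtain ⟨c_root, c_lam, c_app, c_var, c_var₁, c_del₀, c_del₁⟩ := hC
  have lab_of {w : V} {l : Lab4} (hl : G'.lab (h w) = l) : G.lab w = l := hh.1 w ▸ hl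
  refine ⟨?_, ?_, ?_, ?_, ?_, ?_, ?_⟩
  · rw [← hh.2.2, hP', c_root, List.map_nil]
  · intro w' _ hl hs
    obtain ⟨w, rfl⟩ := hh.surjective w'
    obtain ⟨b, hb, rfl⟩ := hh.exists_succ_of_succ hs
    simp [hP', c_lam w b (lab_of hl) hb]
  · intro w' _ k hl hs
    obtain ⟨w, rfl⟩ := hh.surjective w'
    obtain ⟨b, hb, rfl⟩ := hh.exists_succ_of_succ hs
    rw [hP', hP', c_app w b k (lab_of hl) hb]
  · intro w' hl
    obtain ⟨w, rfl⟩ := hh.surjective w'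
    simpa [hP'] using c_var w (lab_of hl)
  · intro hi w' _ hl hs
    obtain ⟨w, rfl⟩ := hh.surjective w'
    obtain ⟨b, hb, rfl⟩ := hh.exists_succ_of_succ hs
    obtain ⟨hbl, hP⟩ := c_var₁ hi w b (lab_of hl) hb
    exact ⟨hh.1 b ▸ hbl, by simp [hP', ← hP]⟩
  · intro w' _ hl hs
    obtain ⟨w, rfl⟩ := hh.surjective w'
    obtain ⟨b, hb, rfl⟩ := hh.exists_succ_of_succ hs
    obtain ⟨x, hP⟩ := c_del₀ w b (lab_of hl) hb
    exact ⟨h x, by simp [hP', ← hP]⟩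
  · intro hj w' _ hl hs
    obtain ⟨w, rfl⟩ := hh.surjective w'
    obtain ⟨b, hb, rfl⟩ := hh.exists_succ_of_succ hs
    obtain ⟨hbl, hP⟩ := c_del₁ hj w b (lab_of hl) hb
    exact ⟨hh.1 b ▸ hbl, by simp [hP', ← hP]⟩

end CorrectAP4

/-- `u` shadows `a` above the base prefixes `p₁` and `p₂`. -/
def PrefixMatch {V V' : Type} (h : V → V') (P : V → List V) (p₁ p₂ : List V) (u a : V) : Prop :=
  h u = h a ∧ ∃ s₁ s₂, P u = p₁ ++ s₁ ∧ P a = p₂ ++ s₂ ∧ s₁.map h = s₂.map h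

section PrefixTransfer

variable {V V' : Type} {G : TermGraph Lab4 (ar4 1 2) V} {P : V → List V}
  {G' : TermGraph Lab4 (ar4 1 2) V'} {h : V → V'} {P' : V' → List V'}

namespace CorrectAP4

/-- How the prefix changes along the `k`-th edge depends only on the label and on `k`. -/
theorem prefix_step (hC : CorrectAP4 1 2 G P) {k : ℕ} {a b u b₁ : V} (hab : G.Succ k a b)
    (hub : G.Succ k u b₁) (hl : G.lab u = G.lab a) :
    (P b = P a ++ [a] ∧ P b₁ = P u ++ [u]) ∨ (P b = P a ∧ P b₁ = P u) ∨
      ((G.lab a = .var ∨ G.lab a = .del) ∧ (∃ x, P a = P b ++ [x]) ∧ ∃ x, P u = P b₁ ++ [x]) := by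
  obtain ⟨-, c_lam, c_app, -, c_var₁, c_del₀, c_del₁⟩ := hC
  have hk := hab.lt_ar
  cases hla : G.lab a with
  | app => exact .inr (.inl ⟨c_app a b k hla hab, c_app u b₁ k (hl.trans hla) hub⟩)
  | lam =>
    obtain rfl : k = 0 := by simpa [hla, ar4] using hk
    exact .inl ⟨c_lam a b hla hab, c_lam u b₁ (hl.trans hla) hub⟩
  | var =>
    obtain rfl : k = 0 := by simpa [hla, ar4] using hk
    exact .inr (.inr ⟨.inl rfl, ⟨b, (c_var₁ rfl a b hla hab).2.symm⟩,
      ⟨b₁, (c_var₁ rfl u b₁ (hl.trans hla) hub).2.symm⟩⟩)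
  | del =>
    rcases (show k = 0 ∨ k = 1 by simp only [hla, ar4] at hk; omega) with rfl | rfl
    · obtain ⟨x, hx⟩ := c_del₀ a b hla hab
      obtain ⟨x₁, hx₁⟩ := c_del₀ u b₁ (hl.trans hla) hub
      exact .inr (.inr ⟨.inr rfl, ⟨x, hx.symm⟩, ⟨x₁, hx₁.symm⟩⟩)
    · exact .inr (.inr ⟨.inr rfl, ⟨b, (c_del₁ rfl a b hla hab).2.symm⟩,
        ⟨b₁, (c_del₁ rfl u b₁ (hl.trans hla) hub).2.symm⟩⟩)

theorem prefix_eq_of_eq_append_cons (hC : CorrectAP4 1 2 G P) {w v : V} {q r : List V}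
    (hw : P w = q ++ v :: r) : P v = q := by
  induction G.reach w generalizing r with
  | refl => simp [hC.1] at hw
  | @tail a c _ hac ih =>
    obtain ⟨k, hk⟩ := TermGraph.Edge.exists_succ (G := G) hac
    rcases hC.prefix_step hk hk rfl with ⟨hc, -⟩ | ⟨hc, -⟩ | ⟨-, ⟨x, hx⟩, -⟩
    · rcases r.eq_nil_or_concat' with rfl | ⟨r, y, rfl⟩
      · obtain ⟨ha, hva⟩ := List.append_inj' (hc.symm.trans hw) rfl
        rwa [← List.singleton_inj.mp hva]
      · have hc' : P a ++ [a] = (q ++ v :: r) ++ [y] := by simp [← hc, hw]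
        exact ih (List.append_inj' hc' rfl).1
    · exact ih (hc ▸ hw)
    · exact ih (r := r ++ [x]) (by simp [hx, hw])

theorem exists_binder_pair (hC : CorrectAP4 1 2 G P) (hh : IsHom h G G') {u a : V}
    (e : h u = h a) (hl : G.lab a = .var ∨ G.lab a = .del) :
    ∃ c₁ c, h c₁ = h c ∧ P u = P c₁ ++ [c₁] ∧ P a = P c ++ [c] := by
  obtain ⟨-, -, -, -, c_var₁, -, c_del₁⟩ := hC
  have hlu := hh.lab_eq_of_eq e
  rcases hl with hl | hl
  · obtain ⟨c, hc⟩ :=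
      TermGraph.exists_succ_of_lt_ar (G := G) (k := 0) (a := a) (by simp [hl, ar4])
    obtain ⟨c₁, hc₁, ec⟩ := hh.exists_succ_of_eq e hc
    exact ⟨c₁, c, ec, (c_var₁ rfl u c₁ (hlu.trans hl) hc₁).2.symm, (c_var₁ rfl a c hl hc).2.symm⟩
  · obtain ⟨c, hc⟩ :=
      TermGraph.exists_succ_of_lt_ar (G := G) (k := 1) (a := a) (by simp [hl, ar4])
    obtain ⟨c₁, hc₁, ec⟩ := hh.exists_succ_of_eq e hc
    exact ⟨c₁, c, ec, (c_del₁ rfl u c₁ (hlu.trans hl) hc₁).2.symm, (c_del₁ rfl a c hl hc).2.symm⟩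

end CorrectAP4

namespace PrefixMatch

variable {p₁ p₂ : List V} {u a b : V}

theorem step (hm : PrefixMatch h P p₁ p₂ u a) (hC : CorrectAP4 1 2 G P) (hh : IsHom h G G')
    (hab : G.Edge a b) :
    (∃ b₁, PrefixMatch h P p₁ p₂ b₁ b) ∨
      (P u = p₁ ∧ P a = p₂ ∧ (G.lab a = .var ∨ G.lab a = .del)) := by
  obtain ⟨e, s₁, s₂, hu, ha, hs⟩ := hm
  obtain ⟨k, hk⟩ := hab.exists_succ
  obtain ⟨b₁, hk₁, e'⟩ := hh.exists_succ_of_eq e hk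
  rcases hC.prefix_step hk hk₁ (hh.lab_eq_of_eq e) with
    ⟨hb, hb₁⟩ | ⟨hb, hb₁⟩ | ⟨hl, ⟨x, hx⟩, x₁, hx₁⟩
  · exact .inl ⟨b₁, e', s₁ ++ [u], s₂ ++ [a], by simp [hb₁, hu], by simp [hb, ha], by simp [hs, e]⟩
  · exact .inl ⟨b₁, e', s₁, s₂, hb₁.trans hu, hb.trans ha, hs⟩
  · rcases s₂.eq_nil_or_concat' with rfl | ⟨t₂, y, rfl⟩
    · obtain rfl : s₁ = [] := by simpa using hs
      exact .inr ⟨by simpa using hu, by simpa using ha, hl⟩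
    · obtain ⟨t₁, l, rfl, ht, hl⟩ := List.map_eq_append_iff.mp (hs.trans (List.map_append ..))
      obtain ⟨y₁, rfl, -⟩ := List.map_eq_singleton_iff.mp hl
      refine .inl ⟨b₁, e', t₁, t₂, ?_, ?_, ht⟩
      · have : P b₁ ++ [x₁] = (p₁ ++ t₁) ++ [y₁] := by rw [← hx₁, hu, List.append_assoc]
        exact (List.append_inj' this rfl).1
      · have : P b ++ [x] = (p₂ ++ t₂) ++ [y] := by rw [← hx, ha, List.append_assoc]
        exact (List.append_inj' this rfl).1

theorem of_reaches (hm : PrefixMatch h P p₁ p₂ u a) (hC : CorrectAP4 1 2 G P)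
    (hh : IsHom h G G') {c : V} (hr : G.Reaches a c) :
    (∃ c₁, PrefixMatch h P p₁ p₂ c₁ c) ∨
      ∃ u' a', h u' = h a' ∧ P u' = p₁ ∧ P a' = p₂ ∧ (G.lab a' = .var ∨ G.lab a' = .del) := by
  induction hr with
  | refl => exact .inl ⟨u, hm⟩
  | tail _ he ih =>
    rcases ih with ⟨c₁, hc⟩ | hpop
    · rcases hc.step hC hh he with hd | ⟨hu, hc', hl⟩
      · exact .inl hd
      · exact .inr ⟨c₁, _, hc.1, hu, hc', hl⟩
    · exact .inr hpop

end PrefixMatch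

namespace CorrectAP4

theorem map_prefix_eq_of_eq_of_ne_nil (hC : CorrectAP4 1 2 G P) (hB : FullyBackLinked G P)
    (hh : IsHom h G G') {w₁ w₂ : V}
    (ih : ∀ c₁ c, h c₁ = h c → (P c₁).length + (P c).length < (P w₁).length + (P w₂).length →
      (P c₁).map h = (P c).map h)
    (e : h w₁ = h w₂) (hne : P w₂ ≠ []) : (P w₁).map h = (P w₂).map h := by
  obtain ⟨p, v, hw₂⟩ := (P w₂).eq_nil_or_concat'.resolve_left hne
  have hv : P v = p := hC.prefix_eq_of_eq_append_cons (r := []) hw₂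
  have hstart : PrefixMatch h P (P w₁) (P w₂) w₁ w₂ := ⟨e, [], [], by simp, by simp, rfl⟩
  rcases hstart.of_reaches hC hh (hB w₂ v p hw₂) with
    ⟨-, -, -, s₂, -, hv', -⟩ | ⟨u, a, e', hu, ha, hl⟩
  · have := congrArg List.length hv'
    simp only [hv, hw₂, List.length_append, List.length_singleton] at this
    omega
  · obtain ⟨c₁, c, ec, hc₁, hc⟩ := hC.exists_binder_pair hh e' hl
    have hsub := ih c₁ c ec (by
      rw [← hu, ← ha, hc₁, hc, List.length_append, List.length_append]
      simp only [List.length_singleton]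
      omega)
    calc (P w₁).map h = (P c₁ ++ [c₁]).map h := by rw [← hu, hc₁]
      _ = (P c ++ [c]).map h := by simp [hsub, ec]
      _ = (P w₂).map h := by rw [← ha, hc]

theorem map_prefix_eq_of_eq (hC : CorrectAP4 1 2 G P) (hB : FullyBackLinked G P)
    (hh : IsHom h G G') {w₁ w₂ : V} (e : h w₁ = h w₂) : (P w₁).map h = (P w₂).map h := by
  induction hn : (P w₁).length + (P w₂).length using Nat.strong_induction_on
    generalizing w₁ w₂ with
  | _ n ih =>
    subst hn
    have ih' : ∀ c₁ c, h c₁ = h c →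
        (P c₁).length + (P c).length < (P w₁).length + (P w₂).length →
        (P c₁).map h = (P c).map h := fun c₁ c ec hlt => ih _ hlt ec rfl
    rcases eq_or_ne (P w₂) [] with hnil₂ | hne₂
    · rcases eq_or_ne (P w₁) [] with hnil₁ | hne₁
      · rw [hnil₁, hnil₂]
      · exact (hC.map_prefix_eq_of_eq_of_ne_nil hB hh
          (fun c₁ c ec hlt => ih' c₁ c ec (by omega)) e.symm hne₁).symm
    · exact hC.map_prefix_eq_of_eq_of_ne_nil hB hh ih' e hne₂

theorem exists_prefix_map (hC : CorrectAP4 1 2 G P) (hB : FullyBackLinked G P)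
    (hh : IsHom h G G') : ∃ P' : V' → List V', ∀ v, P' (h v) = (P v).map h :=
  ⟨fun v' => (P (Function.surjInv hh.surjective v')).map h,
    fun v => hC.map_prefix_eq_of_eq hB hh (Function.surjInv_eq hh.surjective (h v))⟩

end CorrectAP4

theorem FullyBackLinked.of_hom (hB : FullyBackLinked G P) (hh : IsHom h G G')
    (hP' : ∀ v, P' (h v) = (P v).map h) : FullyBackLinked G' P' := by
  intro w' v' p' hw'
  obtain ⟨w, rfl⟩ := hh.surjective w'
  obtain ⟨q, l, hw, -, hl⟩ := List.map_eq_append_iff.mp ((hP' w).symm.trans hw')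
  obtain ⟨v, rfl, rfl⟩ := List.map_eq_singleton_iff.mp hl
  exact hh.reaches (hB w v q hw)

theorem EagerScope.of_hom (hE : EagerScope G P) (hh : IsHom h G G')
    (hP' : ∀ v, P' (h v) = (P v).map h) : EagerScope G' P' := by
  intro w' v' p' hw'
  obtain ⟨w, rfl⟩ := hh.surjective w'
  obtain ⟨q, l, hw, -, hl⟩ := List.map_eq_append_iff.mp ((hP' w).symm.trans hw')
  obtain ⟨v, rfl, rfl⟩ := List.map_eq_singleton_iff.mp hl
  obtain ⟨n, u, rfl, hedge, hsucc, hlab, hpre⟩ := hE w v q hw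
  refine ⟨n, h ∘ u, rfl, fun m => hh.edge (hedge m), hh.succ hsucc, (hh.1 _).trans hlab,
    fun m hm => ?_⟩
  simpa only [Function.comp, hP'] using (hpre m hm).map h

theorem EagerScope.fullyBackLinked (hE : EagerScope G P) : FullyBackLinked G P := by
  intro w v p hw
  obtain ⟨n, u, rfl, hedge, hsucc, -, -⟩ := hE w v p hw
  exact (ReflTransGen.of_fin_path u hedge).tail hsucc.edge

end PrefixTransfer

/-- Theorem 7.3 and Corollary 7.4: if G is a fully back-linked λ-term-graph over
    Σλ^{1,2} and h a homomorphism from G to a Σλ^{1,2}-term-graph G', then G' is again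
    a fully back-linked λ-term-graph, and if G is moreover eager-scope then so is G'.
    Consequently the class of eager-scope λ-term-graphs over Σλ^{1,2} is closed under
    functional bisimulation. -/
theorem ltg_preservation_under_hom_and_eager_closedness :
    (∀ (V V' : Type) (G : TermGraph Lab4 (ar4 1 2) V) (P : V → List V),
      CorrectAP4 1 2 G P → FullyBackLinked G P →
      ∀ (G' : TermGraph Lab4 (ar4 1 2) V') (h : V → V'),
        IsHom h G G' →
        ∃ P' : V' → List V',
          CorrectAP4 1 2 G' P' ∧ FullyBackLinked G' P' ∧
          (EagerScope G P → EagerScope G' P')) ∧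
    (∀ (V V' : Type) (G : TermGraph Lab4 (ar4 1 2) V) (P : V → List V),
      CorrectAP4 1 2 G P → EagerScope G P →
      ∀ (G' : TermGraph Lab4 (ar4 1 2) V') (h : V → V'),
        IsHom h G G' →
        ∃ P' : V' → List V', CorrectAP4 1 2 G' P' ∧ EagerScope G' P') := by
  refine ⟨fun V V' G P hC hB G' h hh => ?_, fun V V' G P hC hE G' h hh => ?_⟩
  · obtain ⟨P', hP'⟩ := hC.exists_prefix_map hB hh
    exact ⟨P', hC.of_hom hh hP', hB.of_hom hh hP', fun hE => hE.of_hom hh hP'⟩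
  · obtain ⟨P', hP'⟩ := hC.exists_prefix_map hE.fullyBackLinked hh
    exact ⟨P', hC.of_hom hh hP', hE.of_hom hh hP'⟩
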